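/- arXiv:2012.07780 — 2 statements merged into one kernel-verified Lean document; each statement's English description precedes it below -/
import Mathlib

section
/- Let (K, ν) be a valued field and let μ be an extension of ν to K[X]. For a monic polynomial Q ∈ K[X] of positive degree, the truncation map μ_Q defined on Q-expansions f = f_0 + f_1 Q + ... + f_n Q^n (with deg f_i < deg Q) by μ_Q(f) = min_i μ(f_i Q^i) satisfies the ultrametric inequality: μ_Q(f + g) ≥ min(μ_Q(f), μ_Q(g)) for all f, g ∈ K[X]. -/
open Polynomial

/-- An additive (Krull) valuation with values in `Γ ∪ {∞}`. -/
structure IsValAdd {R : Type*} [CommRing R] {Γ : Type*} [AddCommGroup Γ] [LinearOrder Γ] [IsOrderedAddMonoid Γ]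
    (v : R → WithTop Γ) : Prop where
  map_mul : ∀ a b, v (a * b) = v a + v b
  map_add : ∀ a b, min (v a) (v b) ≤ v (a + b)
  map_one : v 1 = 0
  map_zero : v 0 = ⊤
  supp : ∀ a, v a = ⊤ → a = 0

/-- The valuation associated to a pair `(a, δ)`:
`ν_{a,δ}(∑ aᵢ (X - a)ⁱ) = min_i (ν aᵢ + i•δ)`. -/
noncomputable def pairVal {K : Type*} [Field K] {Γ : Type*} [AddCommGroup Γ] [LinearOrder Γ] [IsOrderedAddMonoid Γ]
    (ν : K → WithTop Γ) (a : K) (δ : Γ) (f : K[X]) : WithTop Γ :=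
  (Finset.range (f.natDegree + 1)).inf
    fun i => ν ((Polynomial.taylor a f).coeff i) + ((i • δ : Γ) : WithTop Γ)

/-- The coefficients of the `Q`-expansion of a polynomial, by iterated euclidean division. -/
noncomputable def qCoeff {K : Type*} [Field K] (Q : K[X]) : ℕ → K[X] → K[X]
  | 0, f => f %ₘ Q
  | n + 1, f => qCoeff Q n (f /ₘ Q)

/-- The truncation `μ_Q` of `μ` along `Q` : `μ_Q(f) = min_i μ(fᵢ Qⁱ)` over the
`Q`-expansion `f = ∑ fᵢ Qⁱ`. -/
noncomputable def trunc {K : Type*} [Field K] {Γ : Type*} [AddCommGroup Γ] [LinearOrder Γ] [IsOrderedAddMonoid Γ]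
    (μ : K[X] → WithTop Γ) (Q : K[X]) (f : K[X]) : WithTop Γ :=
  (Finset.range (f.natDegree + 1)).inf fun i => μ (qCoeff Q i f * Q ^ i)

/-- `ε_μ(f) < ε_μ(Q)`, stated in cross-multiplied form (valid in the divisible hull). -/
def EpsLt {K : Type*} [Field K] {Γ : Type*} [AddCommGroup Γ] [LinearOrder Γ] [IsOrderedAddMonoid Γ]
    (μ : K[X] → WithTop Γ) (f Q : K[X]) : Prop :=
  ∃ j, 1 ≤ j ∧ μ (hasseDeriv j Q) ≠ ⊤ ∧
    ∀ i, 1 ≤ i → j • μ f + i • μ (hasseDeriv j Q) < i • μ Q + j • μ (hasseDeriv i f)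

/-- `ε_{μ₁}(f) ≤ ε_{μ₂}(g)`, stated in cross-multiplied form. -/
def EpsLE {K L : Type*} [Field K] [Field L] {Γ : Type*} [AddCommGroup Γ] [LinearOrder Γ] [IsOrderedAddMonoid Γ]
    (μ₁ : K[X] → WithTop Γ) (f : K[X]) (μ₂ : L[X] → WithTop Γ) (g : L[X]) : Prop :=
  ∀ i, 1 ≤ i → ∃ j, 1 ≤ j ∧
    j • μ₁ f + i • μ₂ (hasseDeriv j g) ≤ i • μ₂ g + j • μ₁ (hasseDeriv i f)

/-- `Q` is an abstract key polynomial for `μ`. -/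
def IsABKP {K : Type*} [Field K] {Γ : Type*} [AddCommGroup Γ] [LinearOrder Γ] [IsOrderedAddMonoid Γ]
    (μ : K[X] → WithTop Γ) (Q : K[X]) : Prop :=
  Q.Monic ∧ ∀ f : K[X], f ≠ 0 → f.degree < Q.degree → EpsLt μ f Q

/-! Division by a monic `Q` is additive, hence so is every coefficient of the `Q`-expansion, and
`(f + g)ᵢ Qⁱ = fᵢ Qⁱ + gᵢ Qⁱ`. The ultrametric inequality for `μ` then applies term by term; the
expansion coefficients vanish beyond the degree, so every term of `f` and `g` is bounded below by
its truncation. -/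

theorem Polynomial.add_divByMonic {R : Type*} [CommRing R] [Nontrivial R] {q : R[X]} (hq : q.Monic)
    (f g : R[X]) : (f + g) /ₘ q = f /ₘ q + g /ₘ q :=
  (div_modByMonic_unique (f /ₘ q + g /ₘ q) (f %ₘ q + g %ₘ q) hq
    ⟨by linear_combination modByMonic_add_div f q + modByMonic_add_div g q,
      (degree_add_le _ _).trans_lt
        (max_lt (degree_modByMonic_lt _ hq) (degree_modByMonic_lt _ hq))⟩).1

section QExpansion

variable {K : Type*} [Field K] {Q : K[X]}

@[simp]
theorem qCoeff_zero (n : ℕ) : qCoeff Q n 0 = 0 := by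
  induction n with
  | zero => simp [qCoeff]
  | succ n ih => simpa [qCoeff] using ih

theorem qCoeff_add (hQ : Q.Monic) (n : ℕ) (f g : K[X]) :
    qCoeff Q n (f + g) = qCoeff Q n f + qCoeff Q n g := by
  induction n generalizing f g with
  | zero => exact add_modByMonic f g
  | succ n ih => simp only [qCoeff, add_divByMonic hQ, ih]

theorem qCoeff_eq_zero_of_natDegree_lt (hQ : Q.Monic) (hdeg : 0 < Q.natDegree) {n : ℕ}
    {f : K[X]} (h : f.natDegree < n) : qCoeff Q n f = 0 := by
  induction n generalizing f with
  | zero => omega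
  | succ n ih =>
    change qCoeff Q n (f /ₘ Q) = 0
    by_cases hfQ : f.natDegree < Q.natDegree
    · rw [(divByMonic_eq_zero_iff hQ).2 (degree_lt_degree hfQ), qCoeff_zero]
    · exact ih (by rw [natDegree_divByMonic f hQ]; omega)

variable {Γ : Type*} [AddCommGroup Γ] [LinearOrder Γ] [IsOrderedAddMonoid Γ]
  {μ : K[X] → WithTop Γ}

theorem trunc_le (hμ : μ 0 = ⊤) (hQ : Q.Monic) (hdeg : 0 < Q.natDegree) (f : K[X]) (i : ℕ) :
    trunc μ Q f ≤ μ (qCoeff Q i f * Q ^ i) := by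
  rcases le_or_gt i f.natDegree with hi | hi
  · exact Finset.inf_le (Finset.mem_range.2 (Nat.lt_succ_of_le hi))
  · rw [qCoeff_eq_zero_of_natDegree_lt hQ hdeg hi, zero_mul, hμ]
    exact le_top

end QExpansion

theorem truncation_ultrametric_general {K Γ : Type*} [Field K] [AddCommGroup Γ] [LinearOrder Γ] [IsOrderedAddMonoid Γ]
    (μ : Polynomial K → WithTop Γ)
    (hμ : IsValAdd μ)
    (Q : Polynomial K) (hQ : Q.Monic) (hdeg : 0 < Q.natDegree) (f g : Polynomial K) :
    min (trunc μ Q f) (trunc μ Q g) ≤ trunc μ Q (f + g) := by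
  refine Finset.le_inf fun i _ => ?_
  rw [qCoeff_add hQ, add_mul]
  exact (min_le_min (trunc_le hμ.map_zero hQ hdeg f i) (trunc_le hμ.map_zero hQ hdeg g i)).trans
    (hμ.map_add _ _)

/-- the truncation map `μ_Q` satisfies the ultrametric inequality. -/
theorem truncation_ultrametric {K Γ : Type*} [Field K] [AddCommGroup Γ] [LinearOrder Γ] [IsOrderedAddMonoid Γ]
    (ν : K → WithTop Γ) (μ : Polynomial K → WithTop Γ)
    (hν : IsValAdd ν) (hμ : IsValAdd μ) (hext : ∀ c : K, μ (Polynomial.C c) = ν c)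
    (Q : Polynomial K) (hQ : Q.Monic) (hdeg : 0 < Q.natDegree) (f g : Polynomial K) :
    min (trunc μ Q f) (trunc μ Q g) ≤ trunc μ Q (f + g) :=
  truncation_ultrametric_general μ hμ Q hQ hdeg f g
end

section
/- Let (K̄, ν̄) be an algebraically closed valued field. Two pairs (a, δ) and (a', δ') with a, a' ∈ K̄ and δ, δ' in the value group define the same valuation ν̄_{a,δ} = ν̄_{a',δ'} on K̄[X] if and only if δ = δ' and ν̄(a - a') ≥ δ. -/
/-!
In the coordinate `X - a`, `ν_{a,δ}` is the Gauss valuation of radius `δ`. Recentring at `a'`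
turns the `j`-th coefficient into `∑ᵢ C(i+j, j) fᵢ₊ⱼ (a' - a)ⁱ`; binomial coefficients have
nonnegative value, so if `ν(a - a') ≥ δ` the `i`-th term has value at least `ν(fᵢ₊ⱼ) + iδ`,
whence `ν_{a,δ} ≤ ν_{a',δ}`, and equality holds by symmetry. Conversely
`ν_{a,δ}(X - b) = min(ν(a - b), δ)`, and evaluating at `b = a'` and `b = a` forces `δ = δ'` and
`ν(a - a') ≥ δ`.
-/

open Polynomial

theorem Polynomial.coeff_taylor_eq_sum {R : Type*} [CommSemiring R] (c : R) (g : R[X]) (j : ℕ) :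
    (taylor c g).coeff j =
      ∑ i ∈ Finset.range (g.natDegree + 1), ((i + j).choose j : R) * g.coeff (i + j) * c ^ i := by
  have hdeg : (hasseDeriv j g).natDegree < g.natDegree + 1 :=
    Nat.lt_succ_of_le ((natDegree_hasseDeriv_le g j).trans (Nat.sub_le _ _))
  simp only [taylor_coeff, eval_eq_sum_range' hdeg, hasseDeriv_coeff]

section GaussValuation

variable {R Γ : Type*} [CommRing R] [AddCancelCommMonoid Γ] [LinearOrder Γ] [IsOrderedAddMonoid Γ]

theorem AddValuation.map_natCast_nonneg (v : AddValuation R (WithTop Γ)) (n : ℕ) : 0 ≤ v (n : R) := by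
  induction n with
  | zero => simp
  | succ n ih => push_cast; exact v.map_le_add ih v.map_one.ge

theorem AddValuation.exists_map_le_map_sum (v : AddValuation R (WithTop Γ)) {ι : Type*}
    {s : Finset ι} (hs : s.Nonempty) (f : ι → R) : ∃ i ∈ s, v (f i) ≤ v (∑ i ∈ s, f i) := by
  obtain ⟨i, hi, hmin⟩ := s.exists_min_image (fun i => v (f i)) hs
  exact ⟨i, hi, v.map_le_sum hmin⟩

noncomputable def gaussVal (v : AddValuation R (WithTop Γ)) (δ : Γ) (g : R[X]) : WithTop Γ :=
  (Finset.range (g.natDegree + 1)).inf fun i => v (g.coeff i) + ((i • δ : Γ) : WithTop Γ)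

variable {v : AddValuation R (WithTop Γ)} {δ : Γ}

theorem le_gaussVal_iff {γ : WithTop Γ} {g : R[X]} :
    γ ≤ gaussVal v δ g ↔ ∀ i, γ ≤ v (g.coeff i) + ((i • δ : Γ) : WithTop Γ) := by
  simp only [gaussVal, Finset.le_inf_iff, Finset.mem_range, Nat.lt_succ_iff]
  refine ⟨fun h i => ?_, fun h i _ => h i⟩
  by_cases hi : i ≤ g.natDegree
  · exact h i hi
  · simp [coeff_eq_zero_of_natDegree_lt (not_le.mp hi)]

theorem gaussVal_le_gaussVal_taylor {c : R} (hc : (δ : WithTop Γ) ≤ v c) (g : R[X]) :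
    gaussVal v δ g ≤ gaussVal v δ (taylor c g) := by
  refine le_gaussVal_iff.mpr fun j => ?_
  obtain ⟨i, -, hi⟩ := v.exists_map_le_map_sum Finset.nonempty_range_add_one
    fun i => ((i + j).choose j : R) * g.coeff (i + j) * c ^ i
  rw [coeff_taylor_eq_sum]
  have hpow : ((i • δ : Γ) : WithTop Γ) ≤ v (c ^ i) := by
    rw [v.map_pow, WithTop.coe_nsmul]
    exact nsmul_le_nsmul_right hc i
  calc gaussVal v δ g
      ≤ v (g.coeff (i + j)) + (((i + j) • δ : Γ) : WithTop Γ) := le_gaussVal_iff.mp le_rfl _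
    _ = v (g.coeff (i + j)) + ((i • δ : Γ) : WithTop Γ) + ((j • δ : Γ) : WithTop Γ) := by
      rw [add_nsmul, WithTop.coe_add, add_assoc]
    _ ≤ v (((i + j).choose j : R) * g.coeff (i + j) * c ^ i) + ((j • δ : Γ) : WithTop Γ) := by
      rw [v.map_mul, v.map_mul]
      gcongr
      exact le_add_of_nonneg_left (v.map_natCast_nonneg _)
    _ ≤ _ := by gcongr

theorem gaussVal_taylor_le_of_le_sub {a a' : R} (h : (δ : WithTop Γ) ≤ v (a - a')) (f : R[X]) :
    gaussVal v δ (taylor a f) ≤ gaussVal v δ (taylor a' f) := by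
  rw [← sub_add_cancel a' a, ← taylor_taylor]
  exact gaussVal_le_gaussVal_taylor (by rwa [v.map_sub_swap]) _

theorem gaussVal_taylor_X_sub_C [Nontrivial R] (a b : R) :
    gaussVal v δ (taylor a (X - C b)) = min (v (a - b)) δ := by
  have ht : taylor a (X - C b) = X + C (a - b) := by
    rw [map_sub, taylor_X, taylor_C, C_sub]; ring
  rw [ht, gaussVal, natDegree_X_add_C, show Finset.range 2 = {0, 1} from rfl,
    Finset.inf_insert, Finset.inf_singleton]
  simp [min_comm]

end GaussValuation

section

variable {K Γ : Type*} [Field K] [AddCommGroup Γ] [LinearOrder Γ] [IsOrderedAddMonoid Γ]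
  {ν : K → WithTop Γ}

def IsValAdd.toAddValuation (hν : IsValAdd ν) : AddValuation K (WithTop Γ) :=
  AddValuation.of ν hν.map_zero hν.map_one hν.map_add hν.map_mul

@[simp]
theorem IsValAdd.toAddValuation_apply (hν : IsValAdd ν) (x : K) : hν.toAddValuation x = ν x := rfl

theorem pairVal_eq_gaussVal (hν : IsValAdd ν) (a : K) (δ : Γ) (f : K[X]) :
    pairVal ν a δ f = gaussVal hν.toAddValuation δ (taylor a f) := by
  rw [gaussVal, natDegree_taylor]
  rfl

end

theorem pairs_same_valuation_iff_general {K Γ : Type*} [Field K]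
    [AddCommGroup Γ] [LinearOrder Γ] [IsOrderedAddMonoid Γ]
    (ν : K → WithTop Γ) (hν : IsValAdd ν) (a a' : K) (δ δ' : Γ) :
    (∀ f : Polynomial K, pairVal ν a δ f = pairVal ν a' δ' f) ↔
      (δ = δ' ∧ (δ : WithTop Γ) ≤ ν (a - a')) := by
  simp only [pairVal_eq_gaussVal hν]
  constructor
  · intro h
    have h₁ := h (X - C a')
    have h₂ := h (X - C a)
    simp only [gaussVal_taylor_X_sub_C, sub_self, AddValuation.map_zero, min_top_left,
      IsValAdd.toAddValuation_apply] at h₁ h₂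
    have hδ : δ = δ' := WithTop.coe_injective <| le_antisymm
      (by rw [h₂]; exact min_le_right _ _) (by rw [← h₁]; exact min_le_right _ _)
    subst hδ
    exact ⟨rfl, by rw [← h₁]; exact min_le_left _ _⟩
  · rintro ⟨rfl, h⟩ f
    rw [← IsValAdd.toAddValuation_apply hν] at h
    exact le_antisymm (gaussVal_taylor_le_of_le_sub h f)
      (gaussVal_taylor_le_of_le_sub (by rwa [AddValuation.map_sub_swap]) f)

/-- two pairs define the same valuation iff `δ = δ'` and `ν̄(a - a') ≥ δ`. -/
theorem pairs_same_valuation_iff {K Γ : Type*} [Field K] [IsAlgClosed K]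
    [AddCommGroup Γ] [LinearOrder Γ] [IsOrderedAddMonoid Γ]
    (ν : K → WithTop Γ) (hν : IsValAdd ν) (a a' : K) (δ δ' : Γ)
    (hδ : ∃ b : K, b ≠ 0 ∧ ν b = (δ : WithTop Γ))
    (hδ' : ∃ b : K, b ≠ 0 ∧ ν b = (δ' : WithTop Γ)) :
    (∀ f : Polynomial K, pairVal ν a δ f = pairVal ν a' δ' f) ↔
      (δ = δ' ∧ (δ : WithTop Γ) ≤ ν (a - a')) :=
  pairs_same_valuation_iff_general ν hν a a' δ δ'
end
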